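/- Let a, b, c ∈ ℝ and λ > 0 with a < 0, b < 0 and c > 1. Then the discrete-time Hawkes chain with memory 3 and parameters (a,b,c,λ), started at (0,0,0), never returns to (0,0,0) with positive probability: denoting by P_{(0,0,0)} the trajectory law of the chain started at X₀ = (0,0,0), one has P_{(0,0,0)}(X_n ≠ (0,0,0) for all n ≥ 1) > 0; in particular the chain is transient. -/

import Mathlib

/-!
Fix a large integer `m`. From `(0,0,0)` the chain jumps to `(m,0,0)` with positive probability.
From `(y,0,0)` with `y ≥ m` both `a y + λ` and `b y + λ` are nonpositive, so the chain moves
deterministically to `(0,y,0)` and then to `(0,0,y)`; from there the new coordinate is Poisson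
with mean `c y + λ`, and by Chebyshev it is at least `r y`, `r = (c + 1) / 2 > 1`, except with
probability `O(1 / y)`. Hence the chain stays, block of three steps after block, in the tube of
states with a single nonzero coordinate at least `m rᵏ` in block `k`, with failure probabilities
summing to `O(1 / m) ≤ 1/2`. The probability of staying in the tube forever, which avoids the
origin, is therefore at least `P(Poisson(λ) = m) / 2 > 0`.
-/

open scoped BigOperators
open Classical MeasureTheory

/-- The Poisson probability mass function with parameter `s` at `k`. -/
noncomputable def poissonPMF (s : ℝ) (k : ℕ) : ℝ :=
  Real.exp (-s) * s ^ k / (Nat.factorial k)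

/-- The (truncated) intensity `s_{ijk} = max(ai + bj + ck + λ, 0)`. -/
noncomputable def s3 (a b c lam : ℝ) (x : ℕ × ℕ × ℕ) : ℝ :=
  max (a * x.1 + b * x.2.1 + c * x.2.2 + lam) 0

/-- Transition kernel of the discrete-time Hawkes chain with memory `3`. -/
noncomputable def hawkes3P (a b c lam : ℝ) (x y : ℕ × ℕ × ℕ) : ℝ :=
  if y.2.1 = x.1 ∧ y.2.2 = x.2.1 then poissonPMF (s3 a b c lam x) y.1 else 0

open scoped ENNReal

section Poisson

variable {s : ℝ}

lemma poissonPMF_nonneg (hs : 0 ≤ s) (k : ℕ) : 0 ≤ poissonPMF s k := by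
  unfold poissonPMF; positivity

lemma poissonPMF_pos (hs : 0 < s) (k : ℕ) : 0 < poissonPMF s k := by
  unfold poissonPMF; positivity

@[simp]
lemma poissonPMF_zero_zero : poissonPMF 0 0 = 1 := by
  simp [poissonPMF]

lemma hasSum_poissonPMF (s : ℝ) : HasSum (poissonPMF s) 1 := by
  have h := (NormedSpace.expSeries_div_hasSum_exp s).mul_left (Real.exp (-s))
  rw [← congrFun Real.exp_eq_exp_ℝ, ← Real.exp_add, neg_add_cancel, Real.exp_zero] at h
  exact h.congr_fun fun k => mul_div_assoc _ _ _

lemma succ_mul_poissonPMF_succ (s : ℝ) (k : ℕ) :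
    (k + 1) * poissonPMF s (k + 1) = s * poissonPMF s k := by
  simp only [poissonPMF, Nat.factorial_succ, Nat.cast_mul, pow_succ]
  field_simp
  push_cast
  ring

lemma hasSum_mul_poissonPMF (s : ℝ) : HasSum (fun k : ℕ => k * poissonPMF s k) s := by
  have h := (hasSum_poissonPMF s).mul_left s
  rw [mul_one] at h
  have h' : HasSum (fun k : ℕ => ((k + 1 : ℕ) : ℝ) * poissonPMF s (k + 1)) s :=
    h.congr_fun fun k => by push_cast; exact succ_mul_poissonPMF_succ s k
  simpa using (hasSum_nat_add_iff (f := fun k : ℕ => (k : ℝ) * poissonPMF s k) 1).mp h'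

lemma hasSum_mul_sub_one_mul_poissonPMF (s : ℝ) :
    HasSum (fun k : ℕ => k * (k - 1) * poissonPMF s k) (s ^ 2) := by
  have h := (hasSum_mul_poissonPMF s).mul_left s
  rw [← sq] at h
  have h' : HasSum (fun k : ℕ => ((k + 1 : ℕ) : ℝ) * ((k + 1 : ℕ) - 1) * poissonPMF s (k + 1))
      (s ^ 2) :=
    h.congr_fun fun k => by
      push_cast
      linear_combination (k : ℝ) * succ_mul_poissonPMF_succ s k
  simpa using (hasSum_nat_add_iff
    (f := fun k : ℕ => (k : ℝ) * (k - 1) * poissonPMF s k) 1).mp h'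

lemma hasSum_sq_sub_mul_poissonPMF (s : ℝ) :
    HasSum (fun k : ℕ => ((k : ℝ) - s) ^ 2 * poissonPMF s k) s := by
  convert ((hasSum_mul_sub_one_mul_poissonPMF s).add
    ((hasSum_mul_poissonPMF s).mul_left (1 - 2 * s))).add
    ((hasSum_poissonPMF s).mul_left (s ^ 2)) using 1
  · ext k; ring
  · ring

lemma poissonPMF_le_one (hs : 0 ≤ s) (k : ℕ) : poissonPMF s k ≤ 1 :=
  le_hasSum (hasSum_poissonPMF s) k fun j _ => poissonPMF_nonneg hs j

/-- Chebyshev's inequality for the Poisson law. -/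
lemma one_sub_div_sq_le_tsum_poissonPMF (hs : 0 ≤ s) {t : ℝ} (ht : 0 < t) {A : Set ℕ}
    (hA : ∀ k ∉ A, t ≤ |(k : ℝ) - s|) :
    1 - s / t ^ 2 ≤ ∑' k : A, poissonPMF s k := by
  have hvar := (hasSum_sq_sub_mul_poissonPMF s).div_const (t ^ 2)
  have hcompl : ∑' k : ↥Aᶜ, poissonPMF s k ≤ s / t ^ 2 := calc
    ∑' k : ↥Aᶜ, poissonPMF s k ≤ ∑' k : ↥Aᶜ, ((k : ℝ) - s) ^ 2 * poissonPMF s k / t ^ 2 := by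
      refine Summable.tsum_le_tsum (fun k => ?_) ((hasSum_poissonPMF s).summable.subtype _)
        (hvar.summable.subtype _)
      have hk : t ^ 2 ≤ ((k : ℝ) - s) ^ 2 :=
        (pow_le_pow_left₀ ht.le (hA k k.2) 2).trans (sq_abs _).le
      rw [le_div_iff₀ (by positivity)]
      nlinarith [poissonPMF_nonneg hs k]
    _ ≤ s / t ^ 2 := by
      rw [← hvar.tsum_eq]
      exact hvar.summable.tsum_subtype_le _ _
        fun k => div_nonneg (mul_nonneg (sq_nonneg _) (poissonPMF_nonneg hs k)) (sq_nonneg t)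
  have := (hasSum_poissonPMF s).summable.tsum_subtype_add_tsum_subtype_compl A
  rw [(hasSum_poissonPMF s).tsum_eq] at this
  linarith

end Poisson

lemma one_sub_sum_le_prod_one_sub {ι : Type*} (s : Finset ι) {f : ι → ℝ}
    (hf₀ : ∀ i ∈ s, 0 ≤ f i) (hf₁ : ∀ i ∈ s, f i ≤ 1) :
    1 - ∑ i ∈ s, f i ≤ ∏ i ∈ s, (1 - f i) := by
  induction s using Finset.induction_on with
  | empty => simp
  | insert j s hj ih =>
    rw [Finset.sum_insert hj, Finset.prod_insert hj]
    have h₀ := hf₀ j (Finset.mem_insert_self j s)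
    have h₁ := hf₁ j (Finset.mem_insert_self j s)
    have hs₀ : 0 ≤ ∑ i ∈ s, f i :=
      Finset.sum_nonneg fun i hi => hf₀ i (Finset.mem_insert_of_mem hi)
    have ih := ih (fun i hi => hf₀ i (Finset.mem_insert_of_mem hi))
      (fun i hi => hf₁ i (Finset.mem_insert_of_mem hi))
    nlinarith

section MarkovTube

open Fin.NatCast

variable {S : Type*}

def prefixCylinder {N : ℕ} (v : Fin (N + 1) → S) : Set (ℕ → S) :=
  {ω | ∀ i ≤ N, ω i = v (i : Fin (N + 1))}

def tubePaths (C : ℕ → Set S) (N : ℕ) : Set (Fin (N + 1) → S) :=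
  {v | ∀ i : Fin (N + 1), v i ∈ C i}

def IsTrajectoryLaw [MeasurableSpace S] [DecidableEq S] (P : S → S → ℝ) (x₀ : S)
    (ν : Measure (ℕ → S)) : Prop :=
  ∀ (n : ℕ) (s : ℕ → S), (ν {ω | ∀ i ≤ n, ω i = s i}).toReal
    = (if s 0 = x₀ then 1 else 0) * ∏ i ∈ Finset.range n, P (s i) (s (i + 1))

lemma snoc_natCast_of_le {N i : ℕ} (v : Fin (N + 1) → S) (y : S) (hi : i ≤ N) :
    (Fin.snoc v y : Fin (N + 2) → S) (i : Fin (N + 2)) = v (i : Fin (N + 1)) := by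
  have : (i : Fin (N + 2)) = Fin.castSucc (i : Fin (N + 1)) := by
    ext
    rw [Fin.val_castSucc, Fin.val_cast_of_lt (by omega), Fin.val_cast_of_lt (by omega)]
  rw [this, Fin.snoc_castSucc]

lemma snoc_mem_tubePaths {C : ℕ → Set S} {N : ℕ} {v : Fin (N + 1) → S} {y : S} :
    Fin.snoc v y ∈ tubePaths C (N + 1) ↔ v ∈ tubePaths C N ∧ y ∈ C (N + 1) := by
  simp [tubePaths, Fin.forall_fin_succ']

lemma measurableSet_prefixCylinder [MeasurableSpace S] [MeasurableSingletonClass S] {N : ℕ}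
    (v : Fin (N + 1) → S) : MeasurableSet (prefixCylinder v) := by
  simp only [prefixCylinder, Set.ofPred_forall]
  exact .iInter fun i => .iInter fun _ => measurable_pi_apply i (measurableSet_singleton _)

lemma measure_setOf_forall_mem_eq_tsum [MeasurableSpace S] [MeasurableSingletonClass S]
    [Countable S] (ν : Measure (ℕ → S)) (C : ℕ → Set S) (N : ℕ) :
    ν {ω | ∀ i ≤ N, ω i ∈ C i}
      = ∑' v, (tubePaths C N).indicator (fun v => ν (prefixCylinder v)) v := by
  have hunion : {ω | ∀ i ≤ N, ω i ∈ C i} = ⋃ v ∈ tubePaths C N, prefixCylinder v := by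
    ext ω
    simp only [Set.mem_ofPred_eq, Set.mem_iUnion, prefixCylinder, tubePaths, exists_prop]
    constructor
    · intro hω
      refine ⟨fun i => ω i, fun i => hω i (Nat.lt_succ_iff.mp i.2), fun i hi => ?_⟩
      simp [Fin.val_cast_of_lt (Nat.lt_succ_of_le hi)]
    · rintro ⟨v, hv, hω⟩ i hi
      simpa [hω i hi, Fin.val_cast_of_lt (Nat.lt_succ_of_le hi)] using hv i
  have hdisj : (tubePaths C N).PairwiseDisjoint prefixCylinder := by
    intro v _ w _ hvw
    refine Set.disjoint_left.mpr fun ω hv hw => hvw (funext fun i => ?_)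
    have hi := Nat.lt_succ_iff.mp i.2
    simpa [hv i hi, hw i hi] using (hv i hi).symm.trans (hw i hi)
  rw [hunion, measure_biUnion (Set.to_countable _) hdisj fun v _ => measurableSet_prefixCylinder v,
    tsum_subtype (tubePaths C N) fun v => ν (prefixCylinder v)]

lemma IsTrajectoryLaw.measure_prefixCylinder_snoc [MeasurableSpace S] [DecidableEq S]
    {P : S → S → ℝ} {x₀ : S} {ν : Measure (ℕ → S)} [IsFiniteMeasure ν]
    (hν : IsTrajectoryLaw P x₀ ν) {N : ℕ} (v : Fin (N + 1) → S) (y : S) :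
    ν (prefixCylinder (Fin.snoc v y : Fin (N + 2) → S))
      = ν (prefixCylinder v) * ENNReal.ofReal (P (v (Fin.last N)) y) := by
  have hv := hν N fun i => v i
  have hvy := hν (N + 1) fun i => (Fin.snoc v y : Fin (N + 2) → S) i
  rw [Finset.prod_range_succ, snoc_natCast_of_le v y (Nat.zero_le N),
    snoc_natCast_of_le v y le_rfl, Fin.natCast_eq_last (N + 1), Fin.snoc_last,
    Fin.natCast_eq_last N, Finset.prod_congr rfl fun i hi => by
      rw [snoc_natCast_of_le v y (Finset.mem_range.mp hi).le,
        snoc_natCast_of_le v y (Finset.mem_range.mp hi)],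
    ← mul_assoc, ← hv] at hvy
  rw [← ENNReal.ofReal_toReal (measure_ne_top ν (prefixCylinder _)), prefixCylinder, hvy,
    ENNReal.ofReal_mul ENNReal.toReal_nonneg, ENNReal.ofReal_toReal (measure_ne_top ν _)]
  rfl

namespace IsTrajectoryLaw

variable [MeasurableSpace S] [MeasurableSingletonClass S] [Countable S] [DecidableEq S]
  {P : S → S → ℝ} {x₀ : S} {ν : Measure (ℕ → S)} [IsFiniteMeasure ν] {C : ℕ → Set S}

lemma measure_mul_le_measure_succ (hν : IsTrajectoryLaw P x₀ ν) {N : ℕ} {Q : ℝ≥0∞}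
    (hQ : ∀ x ∈ C N, Q ≤ ∑' y : C (N + 1), ENNReal.ofReal (P x y)) :
    ν {ω | ∀ i ≤ N, ω i ∈ C i} * Q ≤ ν {ω | ∀ i ≤ N + 1, ω i ∈ C i} := by
  set w := fun {n : ℕ} (v : Fin (n + 1) → S) => (tubePaths C n).indicator (ν ∘ prefixCylinder) v
  have hstep : ∀ v : Fin (N + 1) → S, w v * Q ≤ ∑' y, w (Fin.snoc v y) := by
    intro v
    by_cases hv : v ∈ tubePaths C N
    · set g := fun y => ν (prefixCylinder v) * ENNReal.ofReal (P (v (Fin.last N)) y)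
      have hsnoc : ∀ y, w (Fin.snoc v y) = (C (N + 1)).indicator g y := by
        intro y
        by_cases hy : y ∈ C (N + 1) <;>
          simp [w, g, Set.indicator_apply, snoc_mem_tubePaths, hv, hy,
            hν.measure_prefixCylinder_snoc]
      calc w v * Q = ν (prefixCylinder v) * Q := by simp [w, hv]
        _ ≤ ∑' y : C (N + 1), g y := by
            rw [ENNReal.tsum_mul_left]
            gcongr
            exact hQ _ (hv (Fin.last N))
        _ = _ := by rw [tsum_congr hsnoc]; exact _root_.tsum_subtype (C (N + 1)) g
    · simp [w, hv]
  calc ν {ω | ∀ i ≤ N, ω i ∈ C i} * Q = ∑' v, w v * Q := by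
        rw [measure_setOf_forall_mem_eq_tsum, ENNReal.tsum_mul_right]; rfl
    _ ≤ ∑' v, ∑' y, w (Fin.snoc v y) := ENNReal.tsum_le_tsum hstep
    _ = ∑' p : S × (Fin (N + 1) → S), w (Fin.snocEquiv (fun _ => S) p) := by
        rw [ENNReal.tsum_comm, ENNReal.tsum_prod']; rfl
    _ = ν {ω | ∀ i ≤ N + 1, ω i ∈ C i} :=
        ((Fin.snocEquiv _).tsum_eq fun u => w u).trans
          (measure_setOf_forall_mem_eq_tsum ν C (N + 1)).symm

theorem prod_le_measure_forall_le_mem (hν : IsTrajectoryLaw P x₀ ν) (h₀ : x₀ ∈ C 0)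
    {Q : ℕ → ℝ≥0∞} (hQ : ∀ n, ∀ x ∈ C n, Q n ≤ ∑' y : C (n + 1), ENNReal.ofReal (P x y))
    (N : ℕ) : ∏ n ∈ Finset.range N, Q n ≤ ν {ω | ∀ i ≤ N, ω i ∈ C i} := by
  induction N with
  | zero =>
    have h := hν 0 fun _ => x₀
    simp only [if_pos, Finset.range_zero, Finset.prod_empty, mul_one] at h
    calc ∏ n ∈ Finset.range 0, Q n = ν {ω | ∀ i ≤ 0, ω i = x₀} := by
          rw [Finset.range_zero, Finset.prod_empty, ← ENNReal.ofReal_toReal (measure_ne_top ν _),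
            h, ENNReal.ofReal_one]
      _ ≤ ν {ω | ∀ i ≤ 0, ω i ∈ C i} :=
          measure_mono fun ω hω i hi => by
            rw [Nat.le_zero.mp hi, hω 0 le_rfl]; exact h₀
  | succ N ih =>
    rw [Finset.prod_range_succ]
    calc (∏ n ∈ Finset.range N, Q n) * Q N ≤ ν {ω | ∀ i ≤ N, ω i ∈ C i} * Q N := by gcongr
      _ ≤ _ := hν.measure_mul_le_measure_succ (hQ N)

theorem le_measure_forall_mem (hν : IsTrajectoryLaw P x₀ ν) (h₀ : x₀ ∈ C 0)
    {Q : ℕ → ℝ≥0∞} (hQ : ∀ n, ∀ x ∈ C n, Q n ≤ ∑' y : C (n + 1), ENNReal.ofReal (P x y))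
    {q : ℝ≥0∞} (hq : ∀ N, q ≤ ∏ n ∈ Finset.range N, Q n) :
    q ≤ ν {ω | ∀ i, ω i ∈ C i} := by
  have hmeas : ∀ i, NullMeasurableSet {ω : ℕ → S | ω i ∈ C i} ν := fun i =>
    (measurable_pi_apply i (Set.to_countable (C i)).measurableSet).nullMeasurableSet
  rw [Set.ofPred_forall, measure_iInter_eq_iInf_measure_iInter_le hmeas ⟨0, measure_ne_top ν _⟩]
  refine le_iInf fun N => ((hq N).trans (hν.prod_le_measure_forall_le_mem h₀ hQ N)).trans_eq ?_
  congr 1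
  ext ω
  simp

end IsTrajectoryLaw

end MarkovTube

section HawkesTube

variable {a b c lam : ℝ} {m : ℕ}

def spike : ℕ → ℕ → ℕ × ℕ × ℕ
  | 0, y => (y, 0, 0)
  | 1, y => (0, y, 0)
  | _, y => (0, 0, y)

def hawkesTube (c : ℝ) (m : ℕ) : ℕ → Set (ℕ × ℕ × ℕ)
  | 0 => {(0, 0, 0)}
  | n + 1 => spike (n % 3) '' {y : ℕ | (m : ℝ) * ((c + 1) / 2) ^ (n / 3) ≤ y}

/-- The Chebyshev bound `1 / (δ² c m rᵏ)`, `δ = (c - 1) / (2c)`, `r = (c + 1) / 2`, for the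
Poisson draw made at time `n + 1 = 3k + 3` to miss the next level `m rᵏ⁺¹`. -/
noncomputable def stepDefect (c : ℝ) (m n : ℕ) : ℝ :=
  if n % 3 = 2 then 4 * c / ((c - 1) ^ 2 * m * ((c + 1) / 2) ^ (n / 3)) else 0

noncomputable def stepBound (c lam : ℝ) (m : ℕ) : ℕ → ℝ
  | 0 => poissonPMF lam m
  | n + 1 => 1 - stepDefect c m n

lemma spike_mem_hawkesTube {n y : ℕ} (hy : (m : ℝ) * ((c + 1) / 2) ^ (n / 3) ≤ y) :
    spike (n % 3) y ∈ hawkesTube c m (n + 1) :=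
  ⟨y, hy, rfl⟩

lemma spike_ne_zero {y : ℕ} (hy : y ≠ 0) (j : ℕ) : spike j y ≠ (0, 0, 0) := by
  rcases j with _ | _ | _ <;> simpa [spike] using hy

lemma zero_notMem_hawkesTube_succ (hc : 1 < c) (hm : 0 < m) (n : ℕ) :
    (0, 0, 0) ∉ hawkesTube c m (n + 1) := by
  rintro ⟨y, hy, hy0⟩
  refine spike_ne_zero (fun h => ?_) _ hy0
  have : (0 : ℝ) < m * ((c + 1) / 2) ^ (n / 3) := by
    have : (0 : ℝ) < (c + 1) / 2 := by linarith
    positivity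
  simp only [Set.mem_ofPred_eq, h, Nat.cast_zero] at hy
  linarith

lemma hawkes3P_shift (x : ℕ × ℕ × ℕ) (ℓ : ℕ) :
    hawkes3P a b c lam x (ℓ, x.1, x.2.1) = poissonPMF (s3 a b c lam x) ℓ := by
  simp [hawkes3P]

lemma hawkes3P_zero_spike (hlam : 0 ≤ lam) (ℓ : ℕ) :
    hawkes3P a b c lam (0, 0, 0) (spike 0 ℓ) = poissonPMF lam ℓ := by
  simp [spike, hawkes3P, s3, hlam]

lemma hawkes3P_spike_zero_one {y : ℕ} (hy : a * y + lam ≤ 0) :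
    hawkes3P a b c lam (spike 0 y) (spike 1 y) = 1 := by
  simp [spike, hawkes3P_shift (y, 0, 0) 0, s3, hy]

lemma hawkes3P_spike_one_two {y : ℕ} (hy : b * y + lam ≤ 0) :
    hawkes3P a b c lam (spike 1 y) (spike 2 y) = 1 := by
  simp [spike, hawkes3P_shift (0, y, 0) 0, s3, hy]

lemma hawkes3P_spike_two_zero {y : ℕ} (hy : 0 ≤ c * y + lam) (ℓ : ℕ) :
    hawkes3P a b c lam (spike 2 y) (spike 0 ℓ) = poissonPMF (c * y + lam) ℓ := by
  simp [spike, hawkes3P_shift (0, 0, y) ℓ, s3, hy]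

lemma one_sub_le_tsum_poissonPMF_window (hc : 1 < c) (hlam : 0 ≤ lam) {k y : ℕ}
    (hm : 0 < m) (hy : (m : ℝ) * ((c + 1) / 2) ^ k ≤ y) :
    1 - 4 * c / ((c - 1) ^ 2 * m * ((c + 1) / 2) ^ k)
      ≤ ∑' ℓ : {ℓ : ℕ | (m : ℝ) * ((c + 1) / 2) ^ (k + 1) ≤ ℓ}, poissonPMF (c * y + lam) ℓ := by
  set r := (c + 1) / 2
  set s := c * y + lam
  set δ := (c - 1) / (2 * c)
  have hc₀ : 0 < c := by linarith
  have hmr : 0 < (m : ℝ) * r ^ k := by positivity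
  have hcy : c * (m * r ^ k) ≤ s := by nlinarith
  have hs : 0 < s := by nlinarith
  have hδ : 0 < δ := div_pos (by linarith) (by positivity)
  have hwindow : ∀ ℓ ∉ {ℓ : ℕ | (m : ℝ) * r ^ (k + 1) ≤ ℓ}, δ * s ≤ |(ℓ : ℝ) - s| := by
    intro ℓ hℓ
    simp only [Set.mem_ofPred_eq, not_le, pow_succ] at hℓ
    have hry : r * y ≤ (1 - δ) * s := by
      have : (1 - δ) * s = r * y + r / c * lam := by simp only [r, s, δ]; field_simp; ring
      have : 0 ≤ r / c * lam := by positivity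
      linarith
    have hℓy : (ℓ : ℝ) < r * y := by nlinarith
    rw [abs_sub_comm]
    exact (by linarith : δ * s ≤ s - ℓ).trans (le_abs_self _)
  refine le_trans ?_ (one_sub_div_sq_le_tsum_poissonPMF hs.le (by positivity) hwindow)
  have hdiv : s / (δ * s) ^ 2 = 4 * c ^ 2 / ((c - 1) ^ 2 * s) := by
    simp only [δ]; field_simp; norm_num
  have hc₁ : 0 < (c - 1) ^ 2 := by nlinarith
  have hbound : 4 * c ^ 2 / ((c - 1) ^ 2 * s) ≤ 4 * c / ((c - 1) ^ 2 * m * r ^ k) := calc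
    4 * c ^ 2 / ((c - 1) ^ 2 * s) ≤ 4 * c ^ 2 / ((c - 1) ^ 2 * (c * (m * r ^ k))) := by
      gcongr
    _ = 4 * c / ((c - 1) ^ 2 * m * r ^ k) := by field_simp
  linarith

lemma ofReal_one_sub_le_tsum_hawkes3P_growth (hc : 1 < c) (hlam : 0 ≤ lam) {k y : ℕ}
    (hm : 0 < m) (hy : (m : ℝ) * ((c + 1) / 2) ^ k ≤ y) {T : Set (ℕ × ℕ × ℕ)}
    (hT : ∀ ℓ : ℕ, (m : ℝ) * ((c + 1) / 2) ^ (k + 1) ≤ ℓ → spike 0 ℓ ∈ T) :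
    ENNReal.ofReal (1 - 4 * c / ((c - 1) ^ 2 * m * ((c + 1) / 2) ^ k))
      ≤ ∑' z : T, ENNReal.ofReal (hawkes3P a b c lam (spike 2 y) z) := by
  set A := {ℓ : ℕ | (m : ℝ) * ((c + 1) / 2) ^ (k + 1) ≤ ℓ}
  have hs : 0 ≤ c * y + lam := by positivity
  have hinj : Function.Injective fun ℓ : A => (⟨spike 0 ℓ, hT ℓ ℓ.2⟩ : T) :=
    fun ℓ ℓ' h => Subtype.ext (by simpa [spike] using h)
  calc ENNReal.ofReal (1 - 4 * c / ((c - 1) ^ 2 * m * ((c + 1) / 2) ^ k))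
      ≤ ENNReal.ofReal (∑' ℓ : A, poissonPMF (c * y + lam) ℓ) :=
        ENNReal.ofReal_le_ofReal (one_sub_le_tsum_poissonPMF_window hc hlam hm hy)
    _ = ∑' ℓ : A, ENNReal.ofReal (hawkes3P a b c lam (spike 2 y) (spike 0 ℓ)) := by
        simp only [hawkes3P_spike_two_zero hs]
        exact ENNReal.ofReal_tsum_of_nonneg (fun ℓ => poissonPMF_nonneg hs ℓ)
          ((hasSum_poissonPMF _).summable.subtype A)
    _ ≤ _ := ENNReal.tsum_comp_le_tsum_of_injective hinj
          fun z => ENNReal.ofReal (hawkes3P a b c lam (spike 2 y) z)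

lemma ofReal_stepBound_le_tsum_hawkes3P (hlam : 0 < lam) (ha : a < 0) (hb : b < 0) (hc : 1 < c)
    (hm : 0 < m) (hma : a * m + lam ≤ 0) (hmb : b * m + lam ≤ 0) (n : ℕ) :
    ∀ x ∈ hawkesTube c m n, ENNReal.ofReal (stepBound c lam m n)
      ≤ ∑' y : hawkesTube c m (n + 1), ENNReal.ofReal (hawkes3P a b c lam x y) := by
  cases n with
  | zero =>
    rintro x rfl
    have hmem : spike 0 m ∈ hawkesTube c m 1 := spike_mem_hawkesTube (n := 0) (by simp)
    refine le_trans (le_of_eq ?_) (ENNReal.le_tsum ⟨_, hmem⟩)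
    rw [stepBound, hawkes3P_zero_spike hlam.le]
  | succ n =>
    rintro _ ⟨y, hy, rfl⟩
    have hym : (m : ℝ) ≤ y :=
      (le_mul_of_one_le_right (Nat.cast_nonneg m) (one_le_pow₀ (by linarith))).trans hy
    have hnext (j : ℕ) (hj : (n + 1) % 3 = j) (hk : (n + 1) / 3 = n / 3) :
        spike j y ∈ hawkesTube c m (n + 2) := by
      rw [← hj]; exact spike_mem_hawkesTube (by rwa [hk])
    rcases (by omega : n % 3 = 0 ∨ n % 3 = 1 ∨ n % 3 = 2) with h | h | h
    · refine le_trans (le_of_eq ?_) (ENNReal.le_tsum ⟨_, hnext 1 (by omega) (by omega)⟩)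
      rw [h, hawkes3P_spike_zero_one (by nlinarith), stepBound, stepDefect, if_neg (by omega),
        sub_zero]
    · refine le_trans (le_of_eq ?_) (ENNReal.le_tsum ⟨_, hnext 2 (by omega) (by omega)⟩)
      rw [h, hawkes3P_spike_one_two (by nlinarith), stepBound, stepDefect, if_neg (by omega),
        sub_zero]
    · rw [h, stepBound, stepDefect, if_pos h]
      refine ofReal_one_sub_le_tsum_hawkes3P_growth hc hlam.le hm hy fun ℓ hℓ => ?_
      rw [show 0 = (n + 1) % 3 by omega]
      exact spike_mem_hawkesTube (by rwa [show (n + 1) / 3 = n / 3 + 1 by omega])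

lemma hasSum_stepDefect (hc : 1 < c) (m : ℕ) :
    HasSum (stepDefect c m) (4 * c * (c + 1) / ((c - 1) ^ 3 * m)) := by
  have hr : 0 ≤ ((c + 1) / 2)⁻¹ := by positivity
  have hr1 : ((c + 1) / 2)⁻¹ < 1 := inv_lt_one_of_one_lt₀ (by linarith)
  have hgeom := (hasSum_geometric_of_lt_one hr hr1).mul_left (4 * c / ((c - 1) ^ 2 * m))
  have hinj : Function.Injective fun k : ℕ => 3 * k + 2 := fun k l h => by simp at h; omega
  have hfun : stepDefect c m ∘ (fun k : ℕ => 3 * k + 2)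
      = fun k => 4 * c / ((c - 1) ^ 2 * m) * ((c + 1) / 2)⁻¹ ^ k := by
    ext k
    simp only [Function.comp, stepDefect, if_pos (show (3 * k + 2) % 3 = 2 by omega),
      show (3 * k + 2) / 3 = k by omega]
    rw [← div_div, div_eq_mul_inv _ (_ ^ k), inv_pow]
  have hsum : 4 * c / ((c - 1) ^ 2 * m) * (1 - ((c + 1) / 2)⁻¹)⁻¹
      = 4 * c * (c + 1) / ((c - 1) ^ 3 * m) := by
    have h : (1 - ((c + 1) / 2)⁻¹)⁻¹ = (c + 1) / (c - 1) := by
      rw [inv_div, one_sub_div (by linarith), inv_div]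
      ring_nf
    rw [h, div_mul_div_comm]
    ring
  rw [← hinj.hasSum_iff, hfun, ← hsum]
  · exact hgeom
  · rintro n hn
    simp only [Set.mem_range, not_exists] at hn
    rw [stepDefect, if_neg fun h => hn (n / 3) (by omega)]

lemma stepDefect_nonneg (hc : 1 < c) (n : ℕ) : 0 ≤ stepDefect c m n := by
  unfold stepDefect
  split_ifs
  · have : 0 < c - 1 := by linarith
    positivity
  · rfl

lemma sum_stepDefect_le (hc : 1 < c) (hD : ∑' n, stepDefect c m n ≤ 1 / 2) (s : Finset ℕ) :
    ∑ n ∈ s, stepDefect c m n ≤ 1 / 2 :=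
  ((hasSum_stepDefect hc m).summable.sum_le_tsum s fun n _ => stepDefect_nonneg hc n).trans hD

lemma stepBound_nonneg (hlam : 0 ≤ lam) (hc : 1 < c) (hD : ∑' n, stepDefect c m n ≤ 1 / 2)
    (n : ℕ) : 0 ≤ stepBound c lam m n := by
  cases n with
  | zero => exact poissonPMF_nonneg hlam m
  | succ n =>
    have := sum_stepDefect_le hc hD {n}
    rw [Finset.sum_singleton] at this
    rw [stepBound]
    linarith

lemma ofReal_le_prod_stepBound (hlam : 0 ≤ lam) (hc : 1 < c)
    (hD : ∑' n, stepDefect c m n ≤ 1 / 2) (N : ℕ) :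
    ENNReal.ofReal (poissonPMF lam m / 2)
      ≤ ∏ n ∈ Finset.range N, ENNReal.ofReal (stepBound c lam m n) := by
  rw [← ENNReal.ofReal_prod_of_nonneg fun n _ => stepBound_nonneg hlam hc hD n]
  refine ENNReal.ofReal_le_ofReal ?_
  cases N with
  | zero =>
    rw [Finset.prod_range_zero]
    linarith [poissonPMF_le_one hlam m]
  | succ N =>
    have hprod := one_sub_sum_le_prod_one_sub (Finset.range N)
      (fun n _ => stepDefect_nonneg hc n) fun n _ => by
        have := sum_stepDefect_le hc hD {n}
        rw [Finset.sum_singleton] at this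
        linarith
    have hsum := sum_stepDefect_le hc hD (Finset.range N)
    rw [Finset.prod_range_succ']
    simp only [stepBound]
    nlinarith [poissonPMF_nonneg hlam m]

lemma exists_nat_scale_hawkesTube (ha : a < 0) (hb : b < 0) (hc : 1 < c) :
    ∃ m : ℕ, 0 < m ∧ a * m + lam ≤ 0 ∧ b * m + lam ≤ 0 ∧ ∑' n, stepDefect c m n ≤ 1 / 2 := by
  have hge (K : ℝ) : ∀ᶠ m : ℕ in Filter.atTop, K ≤ m :=
    tendsto_natCast_atTop_atTop.eventually_ge_atTop K
  obtain ⟨m, hm, hma, hmb, hmD⟩ := ((Filter.eventually_gt_atTop 0).and <| (hge (lam / -a)).and <|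
    (hge (lam / -b)).and (hge (8 * c * (c + 1) / (c - 1) ^ 3))).exists
  have hm' : (0 : ℝ) < m := Nat.cast_pos.mpr hm
  have hc₁ : 0 < (c - 1) ^ 3 := pow_pos (by linarith) 3
  refine ⟨m, hm, ?_, ?_, ?_⟩
  · rw [div_le_iff₀ (by linarith)] at hma; linarith
  · rw [div_le_iff₀ (by linarith)] at hmb; linarith
  · rw [div_le_iff₀ hc₁] at hmD
    rw [(hasSum_stepDefect hc m).tsum_eq, div_le_iff₀ (by positivity)]
    linarith

end HawkesTube

/-- If `a < 0`, `b < 0` and `c > 1`, then the discrete-time Hawkes chain with memory `3`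
and parameters `(a,b,c,λ)`, started at `(0,0,0)`, never returns to `(0,0,0)` with positive
probability (hence is transient). Here `μ x` is the trajectory law of the chain started at
`x`, characterized by the cylinder formula (Ionescu-Tulcea construction). -/
theorem hawkes3_transient_case1 (a b c lam : ℝ) (hlam : 0 < lam)
    (ha : a < 0) (hb : b < 0) (hc : 1 < c)
    (μ : ℕ × ℕ × ℕ → Measure (ℕ → ℕ × ℕ × ℕ))
    (hprob : ∀ x, IsProbabilityMeasure (μ x))
    (hcyl : ∀ (x : ℕ × ℕ × ℕ) (n : ℕ) (s : ℕ → ℕ × ℕ × ℕ),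
      (μ x {ω | ∀ i ≤ n, ω i = s i}).toReal
        = (if s 0 = x then 1 else 0)
            * ∏ i ∈ Finset.range n, hawkes3P a b c lam (s i) (s (i + 1))) :
    0 < μ (0, 0, 0) {ω | ∀ n ≥ 1, ω n ≠ (0, 0, 0)} := by
  obtain ⟨m, hm, hma, hmb, hD⟩ := exists_nat_scale_hawkesTube ha hb hc
  have := hprob (0, 0, 0)
  calc 0 < ENNReal.ofReal (poissonPMF lam m / 2) :=
        ENNReal.ofReal_pos.mpr (half_pos (poissonPMF_pos hlam m))
    _ ≤ μ (0, 0, 0) {ω | ∀ i, ω i ∈ hawkesTube c m i} :=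
        IsTrajectoryLaw.le_measure_forall_mem (C := hawkesTube c m) (hcyl (0, 0, 0)) rfl
          (ofReal_stepBound_le_tsum_hawkes3P hlam ha hb hc hm hma hmb)
          (ofReal_le_prod_stepBound hlam.le hc hD)
    _ ≤ μ (0, 0, 0) {ω | ∀ n ≥ 1, ω n ≠ (0, 0, 0)} := measure_mono fun ω hω n hn h => by
        obtain ⟨n, rfl⟩ := Nat.exists_eq_add_of_le' hn
        exact zero_notMem_hawkesTube_succ hc hm n (h ▸ hω (n + 1))
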